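/- Let Q_r ⊂ ℝⁿ be a cube of side length r > 0 with faces parallel to the coordinate axes, and for s ≤ r let Q_s denote the concentric cube of side s. Let u ∈ L^∞(Q_r), let C₀ ≥ 1 and K ≥ 0, and assume the following Harnack-type hypothesis: for every k ∈ ℝ and every ρ ∈ (0, r/2], if u − k ≥ 0 a.e. on Q_{2ρ}, then ess sup_{Q_ρ}(u − k) ≤ C₀·(ess inf_{Q_ρ}(u − k) + K·ρ), and if k − u ≥ 0 a.e. on Q_{2ρ}, then ess sup_{Q_ρ}(k − u) ≤ C₀·(ess inf_{Q_ρ}(k − u) + K·ρ). Then there exist μ ∈ (0,1) and C > 0, depending only on C₀, such that for all 0 < σ < r, osc(u, σ) ≤ C·(σ/r)^μ·(osc(u, r) + K·r), where osc(u, s) := ess sup_{Q_s} u − ess inf_{Q_s} u. -/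

import Mathlib

open MeasureTheory Set Filter

noncomputable section

/-- The closed axis-parallel cube with center `z` and side length `s`. -/
def cube {n : ℕ} (z : Fin n → ℝ) (s : ℝ) : Set (Fin n → ℝ) :=
  {y | ∀ i, |y i - z i| ≤ s / 2}

/-- The essential oscillation of `u` over the cube with center `z` and side `s`. -/
def osc {n : ℕ} (u : (Fin n → ℝ) → ℝ) (z : Fin n → ℝ) (s : ℝ) : ℝ :=
  essSup u (volume.restrict (cube z s)) - essInf u (volume.restrict (cube z s))

lemma cube_eq_Icc {n : ℕ} (z : Fin n → ℝ) (s : ℝ) :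
    cube z s = Set.Icc (fun i => z i - s / 2) (fun i => z i + s / 2) := by
  ext y
  simp only [cube, Set.mem_setOf_eq, Set.mem_Icc, Pi.le_def]
  constructor
  · intro h
    exact ⟨fun i => by linarith [(abs_le.mp (h i)).1],
           fun i => by linarith [(abs_le.mp (h i)).2]⟩
  · intro ⟨h1, h2⟩ i
    rw [abs_le]
    exact ⟨by linarith [h1 i], by linarith [h2 i]⟩

lemma cube_mono {n : ℕ} (z : Fin n → ℝ) {s t : ℝ} (h : s ≤ t) : cube z s ⊆ cube z t := by
  intro y hy i
  exact (hy i).trans (by linarith)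

lemma volume_cube {n : ℕ} (z : Fin n → ℝ) (s : ℝ) :
    volume (cube z s) = ENNReal.ofReal s ^ n := by
  rw [cube_eq_Icc, Real.volume_Icc_pi]
  simp [show ∀ i : Fin n, z i + s / 2 - (z i - s / 2) = s from fun i => by ring]

lemma restrict_cube_ne_zero {n : ℕ} (z : Fin n → ℝ) {s : ℝ} (hs : 0 < s) :
    volume.restrict (cube z s) ≠ 0 := by
  intro h
  have h2 : volume (cube z s) = 0 := by
    rw [← Measure.restrict_apply_univ, h]; simp
  rw [volume_cube] at h2
  simp only [pow_eq_zero_iff', ENNReal.ofReal_eq_zero] at h2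
  rcases n with _ | m
  · simp at h2
  · have : s ≤ 0 := by simpa using h2
    linarith

section Bounds

variable {n : ℕ} {z : Fin n → ℝ} {r M : ℝ} {u : (Fin n → ℝ) → ℝ}

lemma ae_bound_of_le {s : ℝ} (hsr : s ≤ r)
    (hM : ∀ᵐ x ∂(volume.restrict (cube z r)), |u x| ≤ M) :
    ∀ᵐ x ∂(volume.restrict (cube z s)), |u x| ≤ M :=
  hM.filter_mono (ae_mono (Measure.restrict_mono (cube_mono z hsr) le_rfl))

lemma bddAbove_ae {s : ℝ} (hM : ∀ᵐ x ∂(volume.restrict (cube z s)), |u x| ≤ M) :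
    IsBoundedUnder (· ≤ ·) (ae (volume.restrict (cube z s))) u :=
  ⟨M, eventually_map.mpr (hM.mono fun _ h => (abs_le.mp h).2)⟩

lemma bddBelow_ae {s : ℝ} (hM : ∀ᵐ x ∂(volume.restrict (cube z s)), |u x| ≤ M) :
    IsBoundedUnder (· ≥ ·) (ae (volume.restrict (cube z s))) u :=
  ⟨-M, eventually_map.mpr (hM.mono fun _ h => (abs_le.mp h).1)⟩

lemma osc_nonneg (hr : 0 < r)
    (hM : ∀ᵐ x ∂(volume.restrict (cube z r)), |u x| ≤ M)
    {s : ℝ} (hs : 0 < s) (hsr : s ≤ r) : 0 ≤ osc u z s := by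
  haveI : (ae (volume.restrict (cube z s))).NeBot :=
    ae_neBot.mpr (restrict_cube_ne_zero z hs)
  have hMs := ae_bound_of_le hsr hM
  have := liminf_le_limsup (f := ae (volume.restrict (cube z s))) (u := u)
    (bddAbove_ae hMs) (bddBelow_ae hMs)
  simpa [osc, essSup, essInf] using this

lemma osc_mono (hr : 0 < r)
    (hM : ∀ᵐ x ∂(volume.restrict (cube z r)), |u x| ≤ M)
    {s t : ℝ} (hs : 0 < s) (hst : s ≤ t) (htr : t ≤ r) : osc u z s ≤ osc u z t := by
  haveI : (ae (volume.restrict (cube z s))).NeBot :=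
    ae_neBot.mpr (restrict_cube_ne_zero z hs)
  have hMs := ae_bound_of_le (hst.trans htr) hM
  have hMt := ae_bound_of_le htr hM
  have hle : ae (volume.restrict (cube z s)) ≤ ae (volume.restrict (cube z t)) :=
    ae_mono (Measure.restrict_mono (cube_mono z hst) le_rfl)
  have h1 : essSup u (volume.restrict (cube z s)) ≤ essSup u (volume.restrict (cube z t)) :=
    limsup_le_limsup_of_le hle ((bddBelow_ae hMs).isCoboundedUnder_le) (bddAbove_ae hMt)
  have h2 : essInf u (volume.restrict (cube z t)) ≤ essInf u (volume.restrict (cube z s)) :=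
    liminf_le_liminf_of_le hle (bddBelow_ae hMt) ((bddAbove_ae hMs).isCoboundedUnder_ge)
  simp only [osc]
  linarith

lemma osc_step {C₀ K : ℝ} (hC₀ : 1 ≤ C₀) (hr : 0 < r) (hK : 0 ≤ K)
    (hM : ∀ᵐ x ∂(volume.restrict (cube z r)), |u x| ≤ M)
    (hyp : ∀ (k ρ : ℝ), 0 < ρ → ρ ≤ r / 2 →
      ((∀ᵐ x ∂(volume.restrict (cube z (2 * ρ))), k ≤ u x) →
        essSup (fun x => u x - k) (volume.restrict (cube z ρ)) ≤
          C₀ * (essInf (fun x => u x - k) (volume.restrict (cube z ρ)) + K * ρ)) ∧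
      ((∀ᵐ x ∂(volume.restrict (cube z (2 * ρ))), u x ≤ k) →
        essSup (fun x => k - u x) (volume.restrict (cube z ρ)) ≤
          C₀ * (essInf (fun x => k - u x) (volume.restrict (cube z ρ)) + K * ρ)))
    {ρ : ℝ} (hρ : 0 < ρ) (hρr : ρ ≤ r / 2) :
    (1 + C₀) * osc u z ρ ≤ (C₀ - 1) * osc u z (2 * ρ) + 2 * C₀ * K * ρ := by
  set ν := volume.restrict (cube z ρ) with hν
  set ν2 := volume.restrict (cube z (2 * ρ)) with hν2
  haveI : (ae ν).NeBot := ae_neBot.mpr (restrict_cube_ne_zero z hρ)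
  haveI : (ae ν2).NeBot := ae_neBot.mpr (restrict_cube_ne_zero z (by linarith))
  have hMν : ∀ᵐ x ∂ν, |u x| ≤ M := ae_bound_of_le (by linarith) hM
  have hMν2 : ∀ᵐ x ∂ν2, |u x| ≤ M := ae_bound_of_le (by linarith) hM
  have bA := bddAbove_ae hMν
  have bB := bddBelow_ae hMν
  set b := essInf u ν2 with hb
  set B := essSup u ν2 with hB
  have hble : ∀ᵐ x ∂ν2, b ≤ u x := ae_essInf_le (bddBelow_ae hMν2)
  have hBge : ∀ᵐ x ∂ν2, u x ≤ B := ae_le_essSup (bddAbove_ae hMν2)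
  have h1 := (hyp b ρ hρ hρr).1 hble
  have h2 := (hyp B ρ hρ hρr).2 hBge
  have e1 : essSup (fun x => u x - b) ν = essSup u ν - b :=
    limsup_sub_const _ u b bA bB.isCoboundedUnder_le
  have e2 : essInf (fun x => u x - b) ν = essInf u ν - b :=
    liminf_sub_const _ u b bA.isCoboundedUnder_ge bB
  have e3 : essSup (fun x => B - u x) ν = B - essInf u ν :=
    limsup_const_sub _ u B bA.isCoboundedUnder_ge bB
  have e4 : essInf (fun x => B - u x) ν = B - essSup u ν :=
    liminf_const_sub _ u B bA bB.isCoboundedUnder_le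
  rw [e1, e2] at h1
  rw [e3, e4] at h2
  simp only [osc, ← hν, ← hν2, ← hb, ← hB]
  linarith

end Bounds

lemma arith1 {C₀ θ γ X Y K ρ : ℝ} (hC₀ : 1 ≤ C₀) (hθeq : θ * (C₀ + 1) = C₀ - 1)
    (hγθ : θ ≤ γ) (hY : 0 ≤ Y) (hKρ : 0 ≤ K * ρ)
    (key : (1 + C₀) * X ≤ (C₀ - 1) * Y + 2 * C₀ * K * ρ) : X ≤ γ * Y + 2 * K * ρ := by
  have hP : 0 ≤ (1 + C₀) * ((γ - θ) * Y) :=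
    mul_nonneg (by linarith) (mul_nonneg (by linarith) hY)
  have hsum : (1 + C₀) * X ≤ (1 + C₀) * (γ * Y + 2 * K * ρ) := by nlinarith
  exact le_of_mul_le_mul_left hsum (by linarith)

lemma arith2 {γ lam c O KR : ℝ} (hγhalf : 1 / 2 ≤ γ) (hγ1 : γ < 1)
    (hlam : lam = (1 + γ) / 2) (hcγ : (1 - γ) * c = 4) (hO : 0 ≤ O) (hKR : 0 ≤ KR) :
    γ * (O + c * KR) + 2 * KR * γ ≤ lam * (O + c * KR) := by
  have h1 : 0 ≤ (1 - γ) * O := mul_nonneg (by linarith) hO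
  have h2 : 0 ≤ (1 - γ) * KR := mul_nonneg (by linarith) hKR
  have h3 : (1 - γ) * c * KR = 4 * KR := by rw [hcγ]
  rw [hlam]
  nlinarith [h1, h2, h3]

lemma arith3 {lam P X : ℝ} (hlam : 3 / 4 ≤ lam) (hP : 0 ≤ P) (hh : lam * P ≤ X) :
    P ≤ 2 * X := by
  nlinarith [mul_nonneg hP (by linarith : (0:ℝ) ≤ lam - 3 / 4)]

/-- (Oscillation decay.) Suppose `u ∈ L^∞(Q_r)` and for every
`k ∈ ℝ` and `ρ ∈ (0, r/2]`: if `u − k ≥ 0` a.e. on `Q_{2ρ}` then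
`ess sup_{Q_ρ}(u−k) ≤ C₀ (ess inf_{Q_ρ}(u−k) + Kρ)`, and if `k − u ≥ 0` a.e. on
`Q_{2ρ}` then `ess sup_{Q_ρ}(k−u) ≤ C₀ (ess inf_{Q_ρ}(k−u) + Kρ)`. Then there are
`μ ∈ (0,1)` and `C > 0` depending only on `C₀` with
`osc(u,σ) ≤ C (σ/r)^μ (osc(u,r) + Kr)` for all `0 < σ < r`. -/
theorem statement13 (C₀ : ℝ) (hC₀ : 1 ≤ C₀) :
    ∃ μ C : ℝ, 0 < μ ∧ μ < 1 ∧ 0 < C ∧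
      ∀ (n : ℕ) (z : Fin n → ℝ) (r K : ℝ) (u : (Fin n → ℝ) → ℝ),
        0 < r → 0 ≤ K → Measurable u →
        (∃ M : ℝ, ∀ᵐ x ∂(volume.restrict (cube z r)), |u x| ≤ M) →
        (∀ (k ρ : ℝ), 0 < ρ → ρ ≤ r / 2 →
          ((∀ᵐ x ∂(volume.restrict (cube z (2 * ρ))), k ≤ u x) →
            essSup (fun x => u x - k) (volume.restrict (cube z ρ)) ≤
              C₀ * (essInf (fun x => u x - k) (volume.restrict (cube z ρ)) + K * ρ)) ∧
          ((∀ᵐ x ∂(volume.restrict (cube z (2 * ρ))), u x ≤ k) →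
            essSup (fun x => k - u x) (volume.restrict (cube z ρ)) ≤
              C₀ * (essInf (fun x => k - u x) (volume.restrict (cube z ρ)) + K * ρ))) →
        ∀ σ : ℝ, 0 < σ → σ < r →
          osc u z σ ≤ C * (σ / r) ^ μ * (osc u z r + K * r) := by
  set θ : ℝ := (C₀ - 1) / (C₀ + 1) with hθdef
  set γ : ℝ := max θ (1 / 2) with hγdef
  set lam : ℝ := (1 + γ) / 2 with hlamdef
  set c : ℝ := 4 / (1 - γ) with hcdef
  have hθ0 : 0 ≤ θ := div_nonneg (by linarith) (by linarith)
  have hθ1 : θ < 1 := (div_lt_one (by linarith)).mpr (by linarith)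
  have hθeq : θ * (C₀ + 1) = C₀ - 1 := div_mul_cancel₀ _ (by linarith)
  have hγhalf : (1 / 2 : ℝ) ≤ γ := le_max_right _ _
  have hγθ : θ ≤ γ := le_max_left _ _
  have hγ1 : γ < 1 := max_lt hθ1 (by norm_num)
  have hγ0 : 0 ≤ γ := le_trans (by norm_num) hγhalf
  have hlamγ : γ < lam := by rw [hlamdef]; linarith
  have hlam1 : lam < 1 := by rw [hlamdef]; linarith
  have hlam34 : (3 / 4 : ℝ) ≤ lam := by rw [hlamdef]; linarith
  have hlampos : (0 : ℝ) < lam := by linarith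
  have hcγ : (1 - γ) * c = 4 := mul_div_cancel₀ _ (by linarith)
  have hc1 : (1 : ℝ) ≤ c := by nlinarith
  have hcpos : (0 : ℝ) < c := by linarith
  refine ⟨-Real.logb 2 lam, 2 * c, ?_, ?_, by linarith, ?_⟩
  · have := Real.logb_neg one_lt_two hlampos hlam1
    linarith
  · have h1 : Real.logb 2 (2⁻¹ : ℝ) < Real.logb 2 lam :=
      Real.logb_lt_logb one_lt_two (by norm_num) (by linarith)
    have h2 : Real.logb 2 (2⁻¹ : ℝ) = -1 := by
      rw [Real.logb_inv, Real.logb_self_eq_one one_lt_two]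
    rw [h2] at h1
    linarith
  intro n z r K u hr hK hu hMex hyp σ hσ hσr
  obtain ⟨M, hM⟩ := hMex
  set μ : ℝ := -Real.logb 2 lam with hμdef
  have hμpos : 0 < μ := by
    have := Real.logb_neg one_lt_two hlampos hlam1
    rw [hμdef]; linarith
  have hoscr : 0 ≤ osc u z r := osc_nonneg hr hM hr le_rfl
  have hKr : 0 ≤ K * r := mul_nonneg hK hr.le
  set S : ℝ := osc u z r + c * (K * r) with hSdef
  have hS0 : 0 ≤ S := by
    rw [hSdef]
    exact add_nonneg hoscr (mul_nonneg hcpos.le hKr)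
  -- inductive decay estimate
  have ind : ∀ j : ℕ, osc u z (r / 2 ^ j) ≤ lam ^ j * S := by
    intro j
    induction j with
    | zero =>
      simp only [pow_zero, div_one, one_mul]
      linarith [mul_nonneg hcpos.le hKr, hSdef]
    | succ j ih =>
      have h2pow : (0 : ℝ) < 2 ^ j := by positivity
      have h2pow' : (0 : ℝ) < 2 ^ (j + 1) := by positivity
      set ρ : ℝ := r / 2 ^ (j + 1) with hρdef
      have hρpos : 0 < ρ := by positivity
      have h2ρ : 2 * ρ = r / 2 ^ j := by
        rw [hρdef, pow_succ]; field_simp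
      have h2le : (2 : ℝ) ≤ 2 ^ (j + 1) := by
        calc (2 : ℝ) = 2 ^ 1 := (pow_one 2).symm
          _ ≤ 2 ^ (j + 1) := by
            apply pow_le_pow_right₀ one_le_two
            omega
      have hρr2 : ρ ≤ r / 2 := by
        rw [hρdef]
        gcongr
      have hrjr : r / 2 ^ j ≤ r := by
        apply div_le_self hr.le
        exact one_le_pow₀ one_le_two
      have hosc2 : 0 ≤ osc u z (r / 2 ^ j) := osc_nonneg hr hM (by positivity) hrjr
      have key := osc_step hC₀ hr hK hM hyp hρpos hρr2
      rw [h2ρ] at key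
      have hKρ : 0 ≤ K * ρ := mul_nonneg hK hρpos.le
      -- step 1: osc ρ ≤ γ * osc (r / 2^j) + 2 * K * ρ
      have step1 : osc u z ρ ≤ γ * osc u z (r / 2 ^ j) + 2 * K * ρ :=
        arith1 hC₀ hθeq hγθ hosc2 hKρ key
      -- step 2: ρ ≤ r * (γ * lam ^ j)
      have hhalfpow : ((1:ℝ) / 2) ^ (j + 1) ≤ γ ^ (j + 1) :=
        pow_le_pow_left₀ (by norm_num) hγhalf _
      have hglpow : γ ^ (j + 1) ≤ γ * lam ^ j := by
        rw [pow_succ']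
        exact mul_le_mul_of_nonneg_left (pow_le_pow_left₀ hγ0 hlamγ.le j) hγ0
      have hρ_eq : ρ = r * ((1:ℝ) / 2) ^ (j + 1) := by
        rw [hρdef, div_pow, one_pow, mul_one_div]
      have step2 : ρ ≤ r * (γ * lam ^ j) := by
        rw [hρ_eq]
        exact mul_le_mul_of_nonneg_left (hhalfpow.trans hglpow) hr.le
      -- step 3: combine
      have hlamj : (0:ℝ) ≤ lam ^ j := by positivity
      have hkey2 : γ * S + 2 * (K * r) * γ ≤ lam * S := by
        rw [hSdef]
        exact arith2 hγhalf hγ1 hlamdef hcγ hoscr hKr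
      have t1 : γ * osc u z (r / 2 ^ j) ≤ γ * (lam ^ j * S) :=
        mul_le_mul_of_nonneg_left ih hγ0
      have t2 : 2 * K * ρ ≤ 2 * K * (r * (γ * lam ^ j)) := by
        have := mul_le_mul_of_nonneg_left step2 (show (0:ℝ) ≤ 2 * K by linarith)
        linarith
      calc osc u z ρ ≤ γ * osc u z (r / 2 ^ j) + 2 * K * ρ := step1
        _ ≤ γ * (lam ^ j * S) + 2 * K * (r * (γ * lam ^ j)) := by linarith
        _ = lam ^ j * (γ * S + 2 * (K * r) * γ) := by ring
        _ ≤ lam ^ j * (lam * S) := mul_le_mul_of_nonneg_left hkey2 hlamj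
        _ = lam ^ (j + 1) * S := by ring
  -- choose j
  have hrσ : 1 < r / σ := (one_lt_div hσ).mpr hσr
  have hrσpos : 0 < r / σ := by positivity
  set j : ℕ := ⌊Real.logb 2 (r / σ)⌋₊ with hjdef
  have hlogb_nonneg : 0 ≤ Real.logb 2 (r / σ) := Real.logb_nonneg one_lt_two hrσ.le
  have hfl : (j : ℝ) ≤ Real.logb 2 (r / σ) := Nat.floor_le hlogb_nonneg
  have hfl2 : Real.logb 2 (r / σ) < (j : ℝ) + 1 := Nat.lt_floor_add_one _
  have h2logb : (2 : ℝ) ^ Real.logb 2 (r / σ) = r / σ :=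
    Real.rpow_logb two_pos (by norm_num) hrσpos
  have h1 : (2 : ℝ) ^ (j : ℕ) ≤ r / σ := by
    rw [← Real.rpow_natCast, ← h2logb]
    exact Real.rpow_le_rpow_of_exponent_le one_le_two hfl
  have h2 : r / σ < (2 : ℝ) ^ ((j : ℝ) + 1) := by
    rw [← h2logb]
    exact Real.rpow_lt_rpow_of_exponent_lt one_lt_two hfl2
  have h2jpos : (0 : ℝ) < 2 ^ (j : ℕ) := by positivity
  have hσle : σ ≤ r / 2 ^ (j : ℕ) := by
    rw [le_div_iff₀ h2jpos]
    have := (le_div_iff₀ hσ).mp h1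
    linarith
  have hrjr : r / 2 ^ (j : ℕ) ≤ r := div_le_self hr.le (one_le_pow₀ one_le_two)
  have mono := osc_mono hr hM hσ hσle hrjr
  have indj := ind j
  -- lam ^ j ≤ 2 * (σ / r) ^ μ
  have hlam2 : (2 : ℝ) ^ (-μ : ℝ) = lam := by
    rw [hμdef, neg_neg]
    exact Real.rpow_logb two_pos (by norm_num) hlampos
  have hrpowpos : (0 : ℝ) < (2 : ℝ) ^ (-((j : ℝ) + 1)) := Real.rpow_pos_of_pos two_pos _
  have hinv : (2 : ℝ) ^ (-((j : ℝ) + 1)) ≤ σ / r := by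
    rw [Real.rpow_neg two_pos.le, ← inv_div r σ]
    exact inv_anti₀ hrσpos h2.le
  have hrpmono : ((2 : ℝ) ^ (-((j : ℝ) + 1))) ^ μ ≤ (σ / r) ^ μ :=
    Real.rpow_le_rpow hrpowpos.le hinv hμpos.le
  have hpoweq : ((2 : ℝ) ^ (-((j : ℝ) + 1))) ^ μ = lam ^ (j + 1 : ℕ) := by
    rw [← Real.rpow_natCast lam (j + 1), ← hlam2, ← Real.rpow_mul two_pos.le,
      ← Real.rpow_mul two_pos.le]
    push_cast
    ring_nf
  rw [hpoweq] at hrpmono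
  have hlamjpos : (0 : ℝ) ≤ lam ^ j := by positivity
  have hlamj2 : lam ^ j ≤ 2 * (σ / r) ^ μ := by
    have hh : lam * lam ^ j ≤ (σ / r) ^ μ := by
      rw [← pow_succ'] ; exact hrpmono
    exact arith3 hlam34 hlamjpos hh
  have hpowpos : (0 : ℝ) ≤ (σ / r) ^ μ := Real.rpow_nonneg (by positivity) _
  calc osc u z σ ≤ osc u z (r / 2 ^ (j : ℕ)) := mono
    _ ≤ lam ^ j * S := indj
    _ ≤ 2 * (σ / r) ^ μ * S := mul_le_mul_of_nonneg_right hlamj2 hS0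
    _ ≤ 2 * (σ / r) ^ μ * (c * (osc u z r + K * r)) := by
        have hSc : S ≤ c * (osc u z r + K * r) := by
          rw [hSdef]
          linarith [mul_nonneg (sub_nonneg.mpr hc1) hoscr]
        have h2X : (0:ℝ) ≤ 2 * (σ / r) ^ μ := by linarith
        exact mul_le_mul_of_nonneg_left hSc h2X
    _ = 2 * c * (σ / r) ^ μ * (osc u z r + K * r) := by ring
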